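/- arXiv:2001.01158 — 2 statements merged into one kernel-verified Lean document; each statement's English description precedes it below -/
import Mathlib

section
/- Let A be a real N×N matrix, let b ∈ ℝ^N, let ε ≥ 0, let x⁽⁰⁾, x̃ ∈ ℝ^N, and let S ⊆ {1,…,N} be a set of indices such that x̃_i = x⁽⁰⁾_i for every i ∉ S and |x̃_i − x⁽⁰⁾_i| ≤ |x⁽⁰⁾_i| for every i ∈ S. If an index j satisfies |r⁽⁰⁾_j| + Σ_{i ∈ S} |a_{ji} x⁽⁰⁾_i| ≤ ε‖b‖₂/√N, then |r̃_j| ≤ ε‖b‖₂/√N; in particular, if moreover |r⁽⁰⁾_j| ≤ ε‖b‖₂/√N, the local domain S has no influence on the point j. Here r⁽⁰⁾_j = b_j − Σ_{i=1}^N a_{ji} x⁽⁰⁾_i and r̃_j = b_j − Σ_{i=1}^N a_{ji} x̃_i. -/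
/-- If `|r⁽⁰⁾_j| + Σ_{i ∈ S} |a_{ji} x⁽⁰⁾_i| ≤ ε‖b‖₂/√N`, then `|r̃_j| ≤ ε‖b‖₂/√N`;
in particular, if moreover `|r⁽⁰⁾_j| ≤ ε‖b‖₂/√N`, the local domain `S` has no
influence on the point `j` (it is not the case that `|r⁽⁰⁾_j| ≤ ε‖b‖₂/√N` while
`|r̃_j| > ε‖b‖₂/√N`). -/
theorem no_influence_of_local_domain
    (N : ℕ) (A : Matrix (Fin N) (Fin N) ℝ) (b : Fin N → ℝ) (ε : ℝ) (hε : 0 ≤ ε)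
    (x0 xt : Fin N → ℝ) (S : Finset (Fin N))
    (hfix : ∀ i : Fin N, i ∉ S → xt i = x0 i)
    (hrel : ∀ i ∈ S, |xt i - x0 i| ≤ |x0 i|)
    (j : Fin N)
    (hj : |b j - ∑ i : Fin N, A j i * x0 i| + ∑ i ∈ S, |A j i * x0 i|
        ≤ ε * ‖(WithLp.equiv 2 (Fin N → ℝ)).symm b‖ / Real.sqrt N) :
    |b j - ∑ i : Fin N, A j i * xt i|
        ≤ ε * ‖(WithLp.equiv 2 (Fin N → ℝ)).symm b‖ / Real.sqrt N ∧
    ¬ (|b j - ∑ i : Fin N, A j i * x0 i|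
          ≤ ε * ‖(WithLp.equiv 2 (Fin N → ℝ)).symm b‖ / Real.sqrt N ∧
        |b j - ∑ i : Fin N, A j i * xt i|
          > ε * ‖(WithLp.equiv 2 (Fin N → ℝ)).symm b‖ / Real.sqrt N) := by

  have key : |b j - ∑ i : Fin N, A j i * xt i|
      ≤ ε * ‖(WithLp.equiv 2 (Fin N → ℝ)).symm b‖ / Real.sqrt N := by
    have hsplit : (∑ i : Fin N, A j i * xt i) - (∑ i : Fin N, A j i * x0 i)
        = ∑ i ∈ S, A j i * (xt i - x0 i) := by
      rw [← Finset.sum_sub_distrib]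
      rw [← Finset.sum_subset (Finset.subset_univ S)]
      · exact Finset.sum_congr rfl (fun i _ => by ring)
      · intro i _ hi
        rw [hfix i hi]; ring
    have heq : b j - ∑ i : Fin N, A j i * xt i
        = (b j - ∑ i : Fin N, A j i * x0 i) - ∑ i ∈ S, A j i * (xt i - x0 i) := by
      rw [← hsplit]; ring
    calc |b j - ∑ i : Fin N, A j i * xt i|
        ≤ |b j - ∑ i : Fin N, A j i * x0 i| + |∑ i ∈ S, A j i * (xt i - x0 i)| := by
          rw [heq]; exact abs_sub _ _
      _ ≤ |b j - ∑ i : Fin N, A j i * x0 i| + ∑ i ∈ S, |A j i * x0 i| := by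
          gcongr
          calc |∑ i ∈ S, A j i * (xt i - x0 i)| ≤ ∑ i ∈ S, |A j i * (xt i - x0 i)| :=
                Finset.abs_sum_le_sum_abs _ _
            _ ≤ ∑ i ∈ S, |A j i * x0 i| := by
                refine Finset.sum_le_sum fun i hi => ?_
                rw [abs_mul, abs_mul]
                exact mul_le_mul_of_nonneg_left (hrel i hi) (abs_nonneg _)
      _ ≤ _ := hj
  exact ⟨key, fun h => absurd key (not_le.mpr h.2)⟩
end

section
/- Let A be a real N×N matrix, let b ∈ ℝ^N, let ε ≥ 0, let x⁽⁰⁾, x̃ ∈ ℝ^N, and let S ⊆ {1,…,N} be a set of indices such that: (i) x̃_i = x⁽⁰⁾_i for every i ∉ S; (ii) x̃ solves the local subsystem exactly, i.e. Σ_{i=1}^N a_{ji} x̃_i = b_j for every j ∈ S; (iii) |x̃_i − x⁽⁰⁾_i| ≤ |x⁽⁰⁾_i| for every i ∈ S; and (iv) every index j ∉ S satisfies |r⁽⁰⁾_j| + Σ_{i ∈ S} |a_{ji} x⁽⁰⁾_i| ≤ ε‖b‖₂/√N, where r⁽⁰⁾_j = b_j − Σ_{i=1}^N a_{ji} x⁽⁰⁾_i.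 Then the assembled iterate x̃ satisfies the global convergence criterion ‖b − A x̃‖₂ ≤ ε‖b‖₂. -/
/-- If `x̃` agrees with `x⁽⁰⁾` outside `S`, solves the local subsystem exactly,
has relative variation at most one on `S`, and every index `j ∉ S` satisfies
`|r⁽⁰⁾_j| + Σ_{i ∈ S} |a_{ji} x⁽⁰⁾_i| ≤ ε‖b‖₂/√N`, then the assembled iterate
satisfies the global convergence criterion `‖b − A x̃‖₂ ≤ ε‖b‖₂`. -/
theorem assembled_iterate_satisfies_global_criterion
    (N : ℕ) (A : Matrix (Fin N) (Fin N) ℝ) (b : Fin N → ℝ) (ε : ℝ) (hε : 0 ≤ ε)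
    (x0 xt : Fin N → ℝ) (S : Finset (Fin N))
    (hfix : ∀ i : Fin N, i ∉ S → xt i = x0 i)
    (hloc : ∀ j ∈ S, ∑ i : Fin N, A j i * xt i = b j)
    (hrel : ∀ i ∈ S, |xt i - x0 i| ≤ |x0 i|)
    (hout : ∀ j : Fin N, j ∉ S →
      |b j - ∑ i : Fin N, A j i * x0 i| + ∑ i ∈ S, |A j i * x0 i|
        ≤ ε * ‖(WithLp.equiv 2 (Fin N → ℝ)).symm b‖ / Real.sqrt N) :
    ‖(WithLp.equiv 2 (Fin N → ℝ)).symm (b - A.mulVec xt)‖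
      ≤ ε * ‖(WithLp.equiv 2 (Fin N → ℝ)).symm b‖ := by
  set B := ‖(WithLp.equiv 2 (Fin N → ℝ)).symm b‖ with hB
  have hB0 : 0 ≤ B := norm_nonneg _
  have hεB : 0 ≤ ε * B := mul_nonneg hε hB0
  -- pointwise bound on residual
  have key : ∀ j : Fin N, |b j - Matrix.mulVec A xt j| ≤ ε * B / Real.sqrt N := by
    intro j
    by_cases hj : j ∈ S
    · rw [Matrix.mulVec, dotProduct]
      simp only [hloc j hj, sub_self, abs_zero]
      positivity
    · have hS : ∑ i ∈ S, A j i * (xt i - x0 i)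
          = ∑ i : Fin N, A j i * (xt i - x0 i) := by
        apply Finset.sum_subset (Finset.subset_univ S)
        intro i _ hiS
        rw [hfix i hiS]; ring
      have h2 : ∑ i : Fin N, A j i * xt i
          = ∑ i : Fin N, A j i * x0 i + ∑ i : Fin N, A j i * (xt i - x0 i) := by
        rw [← Finset.sum_add_distrib]
        apply Finset.sum_congr rfl
        intro i _; ring
      have h1 : b j - Matrix.mulVec A xt j
          = (b j - ∑ i : Fin N, A j i * x0 i) - ∑ i ∈ S, A j i * (xt i - x0 i) := by
        rw [Matrix.mulVec, dotProduct, hS, h2]; ring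
      rw [h1]
      calc |(b j - ∑ i : Fin N, A j i * x0 i) - ∑ i ∈ S, A j i * (xt i - x0 i)|
          ≤ |b j - ∑ i : Fin N, A j i * x0 i| + |∑ i ∈ S, A j i * (xt i - x0 i)| :=
            abs_sub _ _
        _ ≤ |b j - ∑ i : Fin N, A j i * x0 i| + ∑ i ∈ S, |A j i * x0 i| := by
            gcongr
            calc |∑ i ∈ S, A j i * (xt i - x0 i)| ≤ ∑ i ∈ S, |A j i * (xt i - x0 i)| :=
                  Finset.abs_sum_le_sum_abs _ _
              _ ≤ ∑ i ∈ S, |A j i * x0 i| := by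
                  apply Finset.sum_le_sum
                  intro i hi
                  rw [abs_mul, abs_mul]
                  exact mul_le_mul_of_nonneg_left (hrel i hi) (abs_nonneg _)
        _ ≤ ε * B / Real.sqrt N := hout j hj
  -- now the norm bound
  rw [EuclideanSpace.norm_eq]
  rcases Nat.eq_zero_or_pos N with hN | hN
  · subst hN; simp [hεB]
  have hsN : (0:ℝ) < Real.sqrt N := Real.sqrt_pos.mpr (by exact_mod_cast hN)
  have hpt : ∀ j : Fin N, ‖(WithLp.equiv 2 (Fin N → ℝ)).symm (b - A.mulVec xt) j‖ ^ 2
      ≤ (ε * B / Real.sqrt N) ^ 2 := by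
    intro j
    have h := key j
    have heq : ‖(WithLp.equiv 2 (Fin N → ℝ)).symm (b - A.mulVec xt) j‖
        = |b j - Matrix.mulVec A xt j| := by
      simp [Real.norm_eq_abs]
    rw [heq]
    exact pow_le_pow_left₀ (abs_nonneg _) h 2
  have hsum : ∑ j : Fin N, ‖(WithLp.equiv 2 (Fin N → ℝ)).symm (b - A.mulVec xt) j‖ ^ 2
      ≤ (ε * B) ^ 2 := by
    have h2 : ∑ j : Fin N, ‖(WithLp.equiv 2 (Fin N → ℝ)).symm (b - A.mulVec xt) j‖ ^ 2
        ≤ ∑ _j : Fin N, (ε * B / Real.sqrt N) ^ 2 :=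
      Finset.sum_le_sum fun j _ => hpt j
    refine h2.trans (le_of_eq ?_)
    rw [Finset.sum_const, Finset.card_univ, Fintype.card_fin, nsmul_eq_mul, div_pow,
      Real.sq_sqrt (by positivity : (0:ℝ) ≤ (N:ℝ))]
    field_simp
  exact (Real.sqrt_le_sqrt hsum).trans_eq (Real.sqrt_sq hεB)
end
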